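/- For any probability distribution P = (p₁,…,pₙ) with all pᵢ > 0, there exists a binary alphabetic code with codeword lengths ℓ₁ = ⌈−log₂ p₁⌉, ℓₙ = ⌈−log₂ pₙ⌉, and ℓᵢ = ⌈−log₂ pᵢ⌉ + 1 for 2 ≤ i ≤ n−1, and consequently its average length satisfies ∑ᵢ pᵢ·ℓᵢ ≤ H(P) + 2 − p₁ − pₙ. -/

import Mathlib

/-!
Gilbert–Moore construction with Yeung's lengths. Put `Sᵢ = p₀ + ⋯ + pᵢ₋₁` and let codeword `i`
be the `ℓᵢ`-digit binary expansion of `cᵢ = ⌈Sᵢ 2^ℓᵢ⌉`, i.e. the label of the dyadic interval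
`[cᵢ 2^-ℓᵢ, (cᵢ + 1) 2^-ℓᵢ)`. Since `2^-ℓᵢ ≤ pᵢ`, this interval lies in `[0, 1)`; since
`c₀ = 0` and `2^-ℓᵢ ≤ pᵢ / 2` for the inner symbols, it ends by `Sᵢ₊₁`, which absorbs the
rounding up in `cᵢ`. So the intervals are disjoint and increase with `i`, and disjoint ordered
dyadic intervals have prefix-free, lexicographically ordered labels. The average length bound is
`⌈x⌉ < x + 1` weighted by `pᵢ`.
-/

/-- No codeword is a prefix of another. -/
def PrefixFree {n : ℕ} (w : Fin n → List Bool) : Prop :=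
  ∀ i j : Fin n, i ≠ j → ¬ (w i <+: w j)

/-- The codewords are strictly increasing in the lexicographic order on binary strings. -/
def LexIncreasing {n : ℕ} (w : Fin n → List Bool) : Prop :=
  ∀ i j : Fin n, i < j → List.Lex (· < ·) (w i) (w j)

/-- A binary alphabetic code: prefix-free and lexicographically increasing codewords. -/
def IsAlphabeticCode {n : ℕ} (w : Fin n → List Bool) : Prop :=
  PrefixFree w ∧ LexIncreasing w

open Finset

def LeftOf (u v : List Bool) : Prop :=
  ∃ s a b, u = s ++ false :: a ∧ v = s ++ true :: b

namespace LeftOf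

variable {u v : List Bool}

theorem cons (x : Bool) : LeftOf u v → LeftOf (x :: u) (x :: v) := by
  rintro ⟨s, a, b, rfl, rfl⟩
  exact ⟨x :: s, a, b, rfl, rfl⟩

theorem lex : LeftOf u v → List.Lex (· < ·) u v := by
  rintro ⟨s, a, b, rfl, rfl⟩
  exact List.Lex.append_left _ (List.Lex.rel (by decide)) s

theorem not_prefix : LeftOf u v → ¬ u <+: v := by
  rintro ⟨s, a, b, rfl, rfl⟩ h
  simp [List.prefix_append_right_inj, List.cons_prefix_cons] at h

theorem not_prefix_symm : LeftOf u v → ¬ v <+: u := by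
  rintro ⟨s, a, b, rfl, rfl⟩ h
  simp [List.prefix_append_right_inj, List.cons_prefix_cons] at h

end LeftOf

theorem isAlphabeticCode_of_leftOf {n : ℕ} {w : Fin n → List Bool}
    (h : ∀ i j, i < j → LeftOf (w i) (w j)) : IsAlphabeticCode w := by
  refine ⟨fun i j hij => ?_, fun i j hij => (h i j hij).lex⟩
  rcases lt_or_gt_of_ne hij with hlt | hgt
  · exact (h i j hlt).not_prefix
  · exact (h j i hgt).not_prefix_symm

/-- The `ℓ`-digit binary expansion of `c`, most significant digit first. -/
def binaryWord : ℕ → ℕ → List Bool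
  | 0, _ => []
  | m + 1, c => if c < 2 ^ m then false :: binaryWord m c else true :: binaryWord m (c - 2 ^ m)

@[simp]
theorem binaryWord_length (ℓ c : ℕ) : (binaryWord ℓ c).length = ℓ := by
  induction ℓ generalizing c with
  | zero => rfl
  | succ m ih => by_cases h : c < 2 ^ m <;> simp [binaryWord, h, ih]

theorem binaryWord_leftOf {ℓ₁ ℓ₂ c₁ c₂ : ℕ} (h₁ : c₁ < 2 ^ ℓ₁) (h₂ : c₂ < 2 ^ ℓ₂)
    (h : (c₁ + 1) * 2 ^ ℓ₂ ≤ c₂ * 2 ^ ℓ₁) : LeftOf (binaryWord ℓ₁ c₁) (binaryWord ℓ₂ c₂) := by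
  induction ℓ₁ generalizing ℓ₂ c₁ c₂ with
  | zero => rw [pow_zero, mul_one] at h; nlinarith
  | succ m ih =>
    cases ℓ₂ with
    | zero => rw [pow_zero] at h₂ h; nlinarith
    | succ k =>
      have h' : (c₁ + 1) * 2 ^ k ≤ c₂ * 2 ^ m := by
        rw [pow_succ, pow_succ, ← mul_assoc, ← mul_assoc] at h; omega
      rw [pow_succ] at h₁ h₂
      simp only [binaryWord]
      by_cases hc₁ : c₁ < 2 ^ m <;> by_cases hc₂ : c₂ < 2 ^ k <;>
        simp only [hc₁, hc₂, if_true, if_false]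
      · exact (ih hc₁ hc₂ h').cons false
      · exact ⟨[], _, _, rfl, rfl⟩
      · nlinarith
      · refine (ih (by omega) (by omega) ?_).cons true
        zify [not_lt.1 hc₁, not_lt.1 hc₂]
        nlinarith

/-- `binaryWord ℓ c` labels the dyadic interval `[c / 2^ℓ, (c + 1) / 2^ℓ)`. -/
theorem binaryWord_leftOf_of_div_le {ℓ₁ ℓ₂ c₁ c₂ : ℕ} (h₁ : c₁ < 2 ^ ℓ₁) (h₂ : c₂ < 2 ^ ℓ₂)
    (h : ((c₁ : ℝ) + 1) / 2 ^ ℓ₁ ≤ c₂ / 2 ^ ℓ₂) :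
    LeftOf (binaryWord ℓ₁ c₁) (binaryWord ℓ₂ c₂) := by
  rw [div_le_div_iff₀ (by positivity) (by positivity)] at h
  exact binaryWord_leftOf h₁ h₂ (by exact_mod_cast h)

theorem exists_isAlphabeticCode_of_le_mul_two_pow {n : ℕ} (p : Fin n → ℝ) (ℓ : Fin n → ℕ)
    (hsum : ∑ i, p i ≤ 1) (hℓ : ∀ i, 1 ≤ p i * 2 ^ ℓ i)
    (hℓ_inner : ∀ i : Fin n, i.1 ≠ 0 → i.1 ≠ n - 1 → 2 ≤ p i * 2 ^ ℓ i) :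
    ∃ w : Fin n → List Bool, IsAlphabeticCode w ∧ ∀ i, (w i).length = ℓ i := by
  have hp : ∀ i, 0 ≤ p i := fun i =>
    nonneg_of_mul_nonneg_left (zero_le_one.trans (hℓ i)) (by positivity)
  set S : Fin n → ℝ := fun i => ∑ k ∈ Iio i, p k
  set c : Fin n → ℕ := fun i => ⌈S i * 2 ^ ℓ i⌉₊
  have hS_nonneg (i : Fin n) : 0 ≤ S i := sum_nonneg fun k _ => hp k
  have hS_add (i : Fin n) : S i + p i = ∑ k ∈ Iic i, p k := by
    rw [← Iio_insert, sum_insert notMem_Iio_self, add_comm]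
  have hS_add_le_one (i : Fin n) : S i + p i ≤ 1 :=
    (hS_add i).trans_le <| (sum_le_sum_of_subset_of_nonneg (subset_univ _)
      fun k _ _ => hp k).trans hsum
  have hS_add_le {i j : Fin n} (hij : i < j) : S i + p i ≤ S j := by
    rw [hS_add]
    exact sum_le_sum_of_subset_of_nonneg (fun k hk => mem_Iio.2 ((mem_Iic.1 hk).trans_lt hij))
      fun k _ _ => hp k
  have hS_mul_nonneg (i : Fin n) : 0 ≤ S i * 2 ^ ℓ i := mul_nonneg (hS_nonneg i) (by positivity)
  have hc_lt (i : Fin n) : c i < 2 ^ ℓ i := by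
    have : (c i : ℝ) < 2 ^ ℓ i := calc
      (c i : ℝ) < S i * 2 ^ ℓ i + 1 := Nat.ceil_lt_add_one (hS_mul_nonneg i)
      _ ≤ (S i + p i) * 2 ^ ℓ i := by linarith [hℓ i]
      _ ≤ 2 ^ ℓ i := mul_le_of_le_one_left (by positivity) (hS_add_le_one i)
    exact_mod_cast this
  have hc_succ {i : Fin n} (hi : i.1 ≠ n - 1) : (c i + 1 : ℝ) ≤ (S i + p i) * 2 ^ ℓ i := by
    by_cases h0 : i.1 = 0
    · have hS : S i = 0 := sum_eq_zero fun k hk => absurd (mem_Iio.1 hk) (by omega)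
      simp only [c, hS, zero_mul, Nat.ceil_zero, Nat.cast_zero, zero_add]
      exact hℓ i
    · rw [add_mul]
      linarith [Nat.ceil_lt_add_one (hS_mul_nonneg i), hℓ_inner i h0 hi]
  refine ⟨fun i => binaryWord (ℓ i) (c i),
    isAlphabeticCode_of_leftOf fun i j hij => binaryWord_leftOf_of_div_le (hc_lt i) (hc_lt j) ?_,
    fun i => binaryWord_length _ _⟩
  calc (c i + 1 : ℝ) / 2 ^ ℓ i ≤ S i + p i := (div_le_iff₀ (by positivity)).2 (hc_succ (by omega))
    _ ≤ S j := hS_add_le hij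
    _ ≤ c j / 2 ^ ℓ j := (le_div_iff₀ (by positivity)).2 (Nat.le_ceil _)

noncomputable def shannonLength (q : ℝ) : ℕ := (⌈-Real.logb 2 q⌉).toNat

theorem shannonLength_one : shannonLength 1 = 0 := by
  simp [shannonLength]

theorem one_le_mul_two_pow_shannonLength {q : ℝ} (hq : 0 < q) :
    1 ≤ q * 2 ^ shannonLength q := by
  have hlog : -(shannonLength q : ℝ) ≤ Real.logb 2 q := by
    rw [shannonLength, Int.ceil_toNat, neg_le]; exact Nat.le_ceil _
  rw [Real.le_logb_iff_rpow_le one_lt_two hq, Real.rpow_neg zero_le_two, Real.rpow_natCast,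
    inv_le_iff_one_le_mul₀ (by positivity)] at hlog
  linarith

theorem shannonLength_lt {q : ℝ} (hq : 0 < q) (hq₁ : q ≤ 1) :
    (shannonLength q : ℝ) < -Real.logb 2 q + 1 := by
  rw [shannonLength, Int.ceil_toNat]
  exact Nat.ceil_lt_add_one (neg_nonneg.2 (Real.logb_nonpos one_lt_two hq.le hq₁))

theorem sum_ite_endpoints {n : ℕ} (hn : 2 ≤ n) (f : Fin n → ℝ) :
    ∑ i : Fin n, (if i.1 = 0 ∨ i.1 = n - 1 then 0 else f i) =
      ∑ i, f i - f ⟨0, by omega⟩ - f ⟨n - 1, by omega⟩ := by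
  have hends : univ.filter (fun i : Fin n => i.1 = 0 ∨ i.1 = n - 1) =
      {⟨0, by omega⟩, ⟨n - 1, by omega⟩} := by
    ext i; simp [Fin.ext_iff]
  rw [← sum_filter_not_add_sum_filter univ (fun i : Fin n => i.1 = 0 ∨ i.1 = n - 1) f, hends,
    sum_pair (by simp [Fin.ext_iff]; omega), sum_ite, sum_const_zero, zero_add]
  ring

noncomputable def yeungLength {n : ℕ} (p : Fin n → ℝ) (i : Fin n) : ℕ :=
  if i.1 = 0 ∨ i.1 = n - 1 then shannonLength (p i) else shannonLength (p i) + 1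

section yeungLength

variable {n : ℕ} {p : Fin n → ℝ}

theorem one_le_mul_two_pow_yeungLength (hp : ∀ i, 0 < p i) (i : Fin n) :
    1 ≤ p i * 2 ^ yeungLength p i := by
  refine (one_le_mul_two_pow_shannonLength (hp i)).trans
    (mul_le_mul_of_nonneg_left (pow_le_pow_right₀ one_le_two ?_) (hp i).le)
  unfold yeungLength; split_ifs <;> omega

theorem two_le_mul_two_pow_yeungLength (hp : ∀ i, 0 < p i) {i : Fin n} (h₀ : i.1 ≠ 0)
    (h₁ : i.1 ≠ n - 1) : 2 ≤ p i * 2 ^ yeungLength p i := by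
  rw [yeungLength, if_neg (by tauto), pow_succ, ← mul_assoc]
  linarith [one_le_mul_two_pow_shannonLength (hp i)]

theorem sum_mul_yeungLength_le (hn : 0 < n) (hp : ∀ i, 0 < p i) (hsum : ∑ i, p i = 1) :
    ∑ i, p i * (yeungLength p i : ℝ) ≤
      (-∑ i, p i * Real.logb 2 (p i)) + 2 - p ⟨0, hn⟩ - p ⟨n - 1, Nat.sub_one_lt_of_lt hn⟩ := by
  obtain rfl | hn₂ : n = 1 ∨ 2 ≤ n := by omega
  · have hp₀ : p 0 = 1 := by simpa using hsum
    norm_num [yeungLength, hp₀, shannonLength_one]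
  have hp_le_one (i : Fin n) : p i ≤ 1 :=
    hsum ▸ single_le_sum (fun j _ => (hp j).le) (mem_univ i)
  calc ∑ i, p i * (yeungLength p i : ℝ)
      ≤ ∑ i, (-(p i * Real.logb 2 (p i)) + p i + if i.1 = 0 ∨ i.1 = n - 1 then 0 else p i) := by
        refine sum_le_sum fun i _ => ?_
        have hlen := mul_le_mul_of_nonneg_left (shannonLength_lt (hp i) (hp_le_one i)).le (hp i).le
        unfold yeungLength; split_ifs <;> push_cast <;> linarith
    _ = _ := by
        rw [sum_add_distrib, sum_add_distrib, sum_neg_distrib, sum_ite_endpoints hn₂, hsum]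
        ring

end yeungLength

theorem yeung_bound (n : ℕ) (hn : 0 < n) (p : Fin n → ℝ) (hp : ∀ i, 0 < p i)
    (hsum : ∑ i, p i = 1) :
    ∃ w : Fin n → List Bool, IsAlphabeticCode w ∧
      (∀ i : Fin n, (w i).length =
        if i.1 = 0 ∨ i.1 = n - 1 then (⌈-Real.logb 2 (p i)⌉).toNat
        else (⌈-Real.logb 2 (p i)⌉).toNat + 1) ∧
      ∑ i, p i * ((w i).length : ℝ) ≤
        (-∑ i, p i * Real.logb 2 (p i)) + 2 - p ⟨0, hn⟩ - p ⟨n - 1, by omega⟩ := by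
  obtain ⟨w, hw, hlen⟩ := exists_isAlphabeticCode_of_le_mul_two_pow p (yeungLength p) hsum.le
    (one_le_mul_two_pow_yeungLength hp) fun i => two_le_mul_two_pow_yeungLength hp
  refine ⟨w, hw, hlen, ?_⟩
  simpa only [hlen] using sum_mul_yeungLength_le hn hp hsum
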